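/- arXiv:1402.3246 — 2 statements merged into one kernel-verified Lean document; each statement's English description precedes it below -/
import Mathlib

section
/- With the notation of the remainder forest: let b = 2^ℓ, 0 ≤ k ≤ ℓ, t = 2^{ℓ-k}. For 0 ≤ s < 2^k define m^s_j = m_{st+j}, A^s_j = A_{st+j} for 0 ≤ j < t, and V^s = V · A_0 ⋯ A_{st-1} mod (m_{st} ⋯ m_{b-1}). Let C^s_{i,j} be the accumulating remainder tree values built from V^s, the A^s_j, and the m^s_j. Then for all 0 ≤ i ≤ ℓ-k and 0 ≤ j < 2^i, C^s_{i,j} = C_{i+k, j + 2^i s}, where C_{i,j} denotes the corresponding node of the full remainder tree built from V, the A_j, and the m_j. -/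
/-!
The node `(i + k, j + 2^i s)` of the full tree covers exactly the leaves `st + j·2^(ℓ-k-i)`, …,
`st + (j+1)·2^(ℓ-k-i) - 1` that node `(i, j)` of the `s`-th subtree covers, so both sides reduce
`V·A₀⋯A_{st-1}·A_{st}⋯` modulo the same number. On the left the prefix `V·A₀⋯A_{st-1}` was
already reduced modulo `m_{st}⋯m_{b-1}`, a multiple of that number, and reducing modulo a
multiple first changes nothing, even after multiplying by an integer matrix.
-/

open Matrix Finset

/-- Componentwise reduction of an integer vector modulo a positive integer. -/
def vmod {r : ℕ} (w : Fin r → ℤ) (M : ℕ) : Fin r → ℤ := fun i => w i % (M : ℤ)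

/-- Ordered product A_a · A_{a+1} ⋯ A_{b-1} of a sequence of matrices. -/
def prodA {r : ℕ} (A : ℕ → Matrix (Fin r) (Fin r) ℤ) (a b : ℕ) :
    Matrix (Fin r) (Fin r) ℤ :=
  ((List.range' a (b - a)).map A).prod

lemma prodA_mul_prodA {r : ℕ} (A : ℕ → Matrix (Fin r) (Fin r) ℤ) {a b c : ℕ}
    (hab : a ≤ b) (hbc : b ≤ c) : prodA A a b * prodA A b c = prodA A a c := by
  have hsplit : List.range' a (c - a) = List.range' a (b - a) ++ List.range' b (c - b) := by
    have h := @List.range'_append_1 a (b - a) (c - b)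
    rwa [Nat.add_sub_cancel' hab, add_comm (b - a), Nat.sub_add_sub_cancel hbc hab, eq_comm] at h
  simp only [prodA, hsplit, List.map_append, List.prod_append]

lemma vmod_vecMul_vmod {r : ℕ} (w : Fin r → ℤ) (B : Matrix (Fin r) (Fin r) ℤ)
    {M n : ℕ} (h : n ∣ M) :
    vmod (vecMul (vmod w M) B) n = vmod (vecMul w B) n := by
  funext v
  have hcoeff : ∀ u, w u % M * B u v % n = w u * B u v % n := fun u => by
    rw [Int.mul_emod, Int.emod_emod_of_dvd _ (Int.natCast_dvd_natCast.mpr h), ← Int.mul_emod]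
  simp only [vmod, vecMul, dotProduct]
  rw [Finset.sum_int_mod, Finset.sum_int_mod (f := fun u => w u * B u v)]
  simp only [hcoeff]

lemma add_two_pow_mul_mul_two_pow_sub {i n : ℕ} (hi : i ≤ n) (j s : ℕ) :
    (j + 2 ^ i * s) * 2 ^ (n - i) = s * 2 ^ n + j * 2 ^ (n - i) := by
  rw [add_mul, mul_right_comm, ← pow_add, Nat.add_sub_cancel' hi, add_comm, mul_comm s]

lemma add_two_pow_mul_lt_two_pow_add {i k j s : ℕ} (hj : j < 2 ^ i) (hs : s < 2 ^ k) :
    j + 2 ^ i * s < 2 ^ (i + k) :=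
  calc j + 2 ^ i * s < 2 ^ i * (s + 1) := by rw [mul_add_one]; omega
    _ ≤ 2 ^ i * 2 ^ k := Nat.mul_le_mul_left _ hs
    _ = 2 ^ (i + k) := (pow_add 2 i k).symm

theorem remainderForest_subtree_eq_general (ℓ k r : ℕ) (hk : k ≤ ℓ)
    (A : ℕ → Matrix (Fin r) (Fin r) ℤ) (m : ℕ → ℕ) (V : Fin r → ℤ) :
    let b := 2 ^ ℓ
    let t := 2 ^ (ℓ - k)
    let mnode : ℕ → ℕ → ℕ :=
      fun i j => ∏ u ∈ Finset.Ico (j * 2 ^ (ℓ - i)) ((j + 1) * 2 ^ (ℓ - i)), m u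
    let Cnode : ℕ → ℕ → (Fin r → ℤ) :=
      fun i j => vmod (Matrix.vecMul V (prodA A 0 (j * 2 ^ (ℓ - i)))) (mnode i j)
    let Vs : ℕ → (Fin r → ℤ) :=
      fun s => vmod (Matrix.vecMul V (prodA A 0 (s * t))) (∏ u ∈ Finset.Ico (s * t) b, m u)
    let msnode : ℕ → ℕ → ℕ → ℕ :=
      fun s i j => ∏ u ∈ Finset.Ico (s * t + j * 2 ^ (ℓ - k - i))
        (s * t + (j + 1) * 2 ^ (ℓ - k - i)), m u
    let Csnode : ℕ → ℕ → ℕ → (Fin r → ℤ) :=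
      fun s i j => vmod (Matrix.vecMul (Vs s) (prodA A (s * t) (s * t + j * 2 ^ (ℓ - k - i))))
        (msnode s i j)
    ∀ s < 2 ^ k, ∀ i ≤ ℓ - k, ∀ j < 2 ^ i,
      Csnode s i j = Cnode (i + k) (j + 2 ^ i * s) := by
  intro b t mnode Cnode Vs msnode Csnode s hs i hi j hj
  have hlevel : ℓ - (i + k) = ℓ - k - i := by omega
  have hstart : (j + 2 ^ i * s) * 2 ^ (ℓ - (i + k)) = s * t + j * 2 ^ (ℓ - k - i) := by
    rw [hlevel]; exact add_two_pow_mul_mul_two_pow_sub hi j s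
  have hend : (j + 2 ^ i * s + 1) * 2 ^ (ℓ - (i + k)) = s * t + (j + 1) * 2 ^ (ℓ - k - i) := by
    rw [hlevel, add_right_comm]; exact add_two_pow_mul_mul_two_pow_sub hi (j + 1) s
  have hinside : s * t + (j + 1) * 2 ^ (ℓ - k - i) ≤ b :=
    calc s * t + (j + 1) * 2 ^ (ℓ - k - i) = (j + 2 ^ i * s + 1) * 2 ^ (ℓ - (i + k)) := hend.symm
      _ ≤ 2 ^ (i + k) * 2 ^ (ℓ - (i + k)) :=
        Nat.mul_le_mul_right _ (add_two_pow_mul_lt_two_pow_add hj hs)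
      _ = b := by rw [← pow_add, Nat.add_sub_cancel' (by omega)]
  show vmod (vecMul (vmod (vecMul V (prodA A 0 (s * t))) _) _) _ =
    vmod (vecMul V (prodA A 0 ((j + 2 ^ i * s) * 2 ^ (ℓ - (i + k))))) (∏ u ∈ Ico _ _, m u)
  rw [hstart, hend, ← prodA_mul_prodA A (Nat.zero_le _) (Nat.le_add_right _ _), ← vecMul_vecMul]
  exact vmod_vecMul_vmod _ _ <|
    prod_dvd_prod_of_subset _ _ m (Ico_subset_Ico (Nat.le_add_right _ _) hinside)

/-- Remainder forest: the accumulating remainder tree built from the shifted data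
(V^s, A^s_j = A_{st+j}, m^s_j = m_{st+j}), where V^s = V·A₀⋯A_{st-1} mod m_{st}⋯m_{b-1},
agrees with the corresponding subtree of the full remainder tree: C^s_{i,j} = C_{i+k, j+2^i s}. -/
theorem remainderForest_subtree_eq (ℓ k r : ℕ) (hk : k ≤ ℓ)
    (A : ℕ → Matrix (Fin r) (Fin r) ℤ) (m : ℕ → ℕ) (V : Fin r → ℤ)
    (hmpos : ∀ u, 0 < m u) :
    let b := 2 ^ ℓ
    let t := 2 ^ (ℓ - k)
    let mnode : ℕ → ℕ → ℕ :=
      fun i j => ∏ u ∈ Finset.Ico (j * 2 ^ (ℓ - i)) ((j + 1) * 2 ^ (ℓ - i)), m u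
    let Cnode : ℕ → ℕ → (Fin r → ℤ) :=
      fun i j => vmod (Matrix.vecMul V (prodA A 0 (j * 2 ^ (ℓ - i)))) (mnode i j)
    let Vs : ℕ → (Fin r → ℤ) :=
      fun s => vmod (Matrix.vecMul V (prodA A 0 (s * t))) (∏ u ∈ Finset.Ico (s * t) b, m u)
    let msnode : ℕ → ℕ → ℕ → ℕ :=
      fun s i j => ∏ u ∈ Finset.Ico (s * t + j * 2 ^ (ℓ - k - i))
        (s * t + (j + 1) * 2 ^ (ℓ - k - i)), m u
    let Csnode : ℕ → ℕ → ℕ → (Fin r → ℤ) :=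
      fun s i j => vmod (Matrix.vecMul (Vs s) (prodA A (s * t) (s * t + j * 2 ^ (ℓ - k - i))))
        (msnode s i j)
    ∀ s < 2 ^ k, ∀ i ≤ ℓ - k, ∀ j < 2 ^ i,
      Csnode s i j = Cnode (i + k) (j + 2 ^ i * s) :=
  remainderForest_subtree_eq_general ℓ k r hk A m V
end

section
/- Let f = f_4 x⁴ + f_3 x³ + f_2 x² + f_1 x + f_0 over ℚ with f_0 f_4 ≠ 0. Define for n ≥ 0 the row vector v_n = [f^n_{2n-3}, f^n_{2n-2}, f^n_{2n-1}, f^n_{2n}] (coefficients of f^n, zero for negative index). Then for all n ≥ 3, D_n · v_{n+1} = v_n · M_n, where D_n = 2(n+2)(2n+1)(2n+5) f_0 f_4 and M_n is the explicit 4×4 matrix with entries given in terms of J_1 = (n+1)(2n+1) f_0, J_2 = (n+1)(2n+1)(2n+5) f_0 f_4, J_3 = 2(n+1)(n+2)(2n+5) f_0 f_4, J_4 = (n+2)(2n+5) f_4 by: column 1 entries (-(n+3) f_3² + 4(n+2) f_2 f_4) J_1, (-2 f_2 f_3 + 6(n+2) f_1 f_4) J_1, ((n-1) f_1 f_3 +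 8(n+2) f_0 f_4) J_1, 2n f_0 f_3 J_1; column 2 entries f_3 J_2, 2 f_2 J_2, 3 f_1 J_2, 4 f_0 J_2; column 3 entries 4 f_4 J_3, 3 f_3 J_3, 2 f_2 J_3, f_1 J_3; column 4 entries (2n+3) f_1 f_4 J_4, (4(2n+1) f_0 f_4 + (n+2) f_1 f_3) J_4, (3(2n+1) f_0 f_3 + f_1 f_2) J_4, (2(2n+1) f_0 f_2 - n f_1²) J_4. -/
/-!
Write `aₖ` for the coefficients of `fⁿ`. Two families of linear relations hold among them:
`f^{n+1} = f · fⁿ` gives each coefficient of `f^{n+1}` as `∑ⱼ fⱼ a_{k-j}`, and comparing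
coefficients in `f · (fⁿ)' = n f' fⁿ` gives `∑ⱼ (k - j - j n) fⱼ a_{k-j} = 0`. The entries of
`v_{n+1}` involve `a_{2n-5}, …, a_{2n+2}`; the second relation at `k = 2n-1, …, 2n+2` expresses the
four coefficients outside the window `a_{2n-3}, …, a_{2n}` through those inside, after division by
their multipliers `k f₀` and `(k - 4 - 4n) f₄`. Clearing these denominators gives `Dₙ` and `Mₙ`.
-/

open Polynomial Finset Matrix

noncomputable def coeffZ {F : Type*} [Semiring F] (g : Polynomial F) (k : ℤ) : F :=
  if 0 ≤ k then g.coeff k.toNat else 0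

section IntegerIndex

variable {R : Type*}

lemma coeffZ_add [Semiring R] (g h : R[X]) (m : ℤ) :
    coeffZ (g + h) m = coeffZ g m + coeffZ h m := by
  unfold coeffZ; split_ifs <;> simp

lemma coeffZ_C_mul_X_pow_mul [Semiring R] (c : R) (j : ℕ) (g : R[X]) (m : ℤ) :
    coeffZ (C c * X ^ j * g) m = c * coeffZ g (m - j) := by
  unfold coeffZ
  rw [mul_assoc]
  split_ifs with hm hmj hmj
  · rw [coeff_C_mul, coeff_X_pow_mul', if_pos (by omega)]; congr 2; omega
  · rw [coeff_C_mul, coeff_X_pow_mul', if_neg (by omega), mul_zero]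
  · omega
  · rw [mul_zero]

lemma coeffZ_derivative [Ring R] (g : R[X]) (m : ℤ) :
    coeffZ (derivative g) m = coeffZ g (m + 1) * (m + 1) := by
  unfold coeffZ
  split_ifs with h1 h2 h2
  · rw [coeff_derivative, show (m + 1).toNat = m.toNat + 1 by omega, ← Int.cast_natCast,
      Int.toNat_of_nonneg h1]
  · omega
  · rw [show m = -1 by omega]; simp
  · rw [zero_mul]

end IntegerIndex

lemma mul_derivative_pow {R : Type*} [CommSemiring R] (f : R[X]) (n : ℕ) :
    f * derivative (f ^ n) = C (n : R) * f ^ n * derivative f := by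
  cases n with
  | zero => simp
  | succ n => rw [derivative_pow, Nat.add_sub_cancel, pow_succ']; ring

section Quartic

variable {R : Type*} [CommRing R] {f0 f1 f2 f3 f4 : R} {f : R[X]}

lemma coeffZ_quartic_mul
    (hf : f = C f4 * X ^ 4 + C f3 * X ^ 3 + C f2 * X ^ 2 + C f1 * X + C f0) (g : R[X]) (m : ℤ) :
    coeffZ (f * g) m = f0 * coeffZ g m + f1 * coeffZ g (m - 1) + f2 * coeffZ g (m - 2)
      + f3 * coeffZ g (m - 3) + f4 * coeffZ g (m - 4) := by
  have hfg : f * g = C f4 * X ^ 4 * g + C f3 * X ^ 3 * g + C f2 * X ^ 2 * g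
      + C f1 * X ^ 1 * g + C f0 * X ^ 0 * g := by
    rw [hf]; ring
  simp only [hfg, coeffZ_add, coeffZ_C_mul_X_pow_mul, Nat.cast_ofNat, Nat.cast_one,
    Nat.cast_zero, sub_zero]
  ring

lemma coeffZ_quartic_pow_succ
    (hf : f = C f4 * X ^ 4 + C f3 * X ^ 3 + C f2 * X ^ 2 + C f1 * X + C f0) (n : ℕ) (m : ℤ) :
    coeffZ (f ^ (n + 1)) m = f0 * coeffZ (f ^ n) m + f1 * coeffZ (f ^ n) (m - 1)
      + f2 * coeffZ (f ^ n) (m - 2) + f3 * coeffZ (f ^ n) (m - 3)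
      + f4 * coeffZ (f ^ n) (m - 4) := by
  rw [pow_succ', coeffZ_quartic_mul hf]

lemma coeffZ_quartic_pow_recurrence
    (hf : f = C f4 * X ^ 4 + C f3 * X ^ 3 + C f2 * X ^ 2 + C f1 * X + C f0) (n : ℕ) (m : ℤ) :
    m * f0 * coeffZ (f ^ n) m + (m - 1 - n) * f1 * coeffZ (f ^ n) (m - 1)
      + (m - 2 - 2 * n) * f2 * coeffZ (f ^ n) (m - 2)
      + (m - 3 - 3 * n) * f3 * coeffZ (f ^ n) (m - 3)
      + (m - 4 - 4 * n) * f4 * coeffZ (f ^ n) (m - 4) = 0 := by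
  have hdf : derivative f = C (4 * f4) * X ^ 3 + C (3 * f3) * X ^ 2 + C (2 * f2) * X + C f1 := by
    simp only [hf, derivative_add, derivative_C_mul_X_pow, derivative_C_mul_X, derivative_C]
    norm_num
    ring
  have hf' : C (n : R) * f ^ n * derivative f
      = C (n * (4 * f4)) * X ^ 3 * f ^ n + C (n * (3 * f3)) * X ^ 2 * f ^ n
        + C (n * (2 * f2)) * X ^ 1 * f ^ n + C (n * f1) * X ^ 0 * f ^ n := by
    rw [hdf]
    simp only [map_mul]
    ring
  have H := congrArg (coeffZ · (m - 1)) (mul_derivative_pow f n)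
  simp only [coeffZ_quartic_mul hf, hf', coeffZ_add, coeffZ_C_mul_X_pow_mul,
    coeffZ_derivative, sub_add_cancel, sub_sub, sub_add] at H
  norm_num at H
  linear_combination H

end Quartic

theorem genus1_quartic_transition_general (f0 f1 f2 f3 f4 : ℚ)
    (f : Polynomial ℚ)
    (hf : f = C f4 * X ^ 4 + C f3 * X ^ 3 + C f2 * X ^ 2 + C f1 * X + C f0)
    (n : ℕ)
    (J1 J2 J3 J4 : ℚ)
    (hJ1 : J1 = ((n : ℚ) + 1) * (2 * n + 1) * f0)
    (hJ2 : J2 = ((n : ℚ) + 1) * (2 * n + 1) * (2 * n + 5) * f0 * f4)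
    (hJ3 : J3 = 2 * ((n : ℚ) + 1) * ((n : ℚ) + 2) * (2 * n + 5) * f0 * f4)
    (hJ4 : J4 = ((n : ℚ) + 2) * (2 * n + 5) * f4)
    (M : Matrix (Fin 4) (Fin 4) ℚ)
    (hM : M = !![(-((n : ℚ) + 3) * f3 ^ 2 + 4 * ((n : ℚ) + 2) * f2 * f4) * J1,
                   f3 * J2, 4 * f4 * J3, (2 * (n : ℚ) + 3) * f1 * f4 * J4;
                 (-2 * f2 * f3 + 6 * ((n : ℚ) + 2) * f1 * f4) * J1,
                   2 * f2 * J2, 3 * f3 * J3,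
                   (4 * (2 * (n : ℚ) + 1) * f0 * f4 + ((n : ℚ) + 2) * f1 * f3) * J4;
                 (((n : ℚ) - 1) * f1 * f3 + 8 * ((n : ℚ) + 2) * f0 * f4) * J1,
                   3 * f1 * J2, 2 * f2 * J3,
                   (3 * (2 * (n : ℚ) + 1) * f0 * f3 + f1 * f2) * J4;
                 2 * (n : ℚ) * f0 * f3 * J1, 4 * f0 * J2, f1 * J3,
                   (2 * (2 * (n : ℚ) + 1) * f0 * f2 - (n : ℚ) * f1 ^ 2) * J4]) :
    (2 * ((n : ℚ) + 2) * (2 * (n : ℚ) + 1) * (2 * (n : ℚ) + 5) * f0 * f4) •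
        (![coeffZ (f ^ (n + 1)) (2 * (n : ℤ) - 1),
           coeffZ (f ^ (n + 1)) (2 * (n : ℤ)),
           coeffZ (f ^ (n + 1)) (2 * (n : ℤ) + 1),
           coeffZ (f ^ (n + 1)) (2 * (n : ℤ) + 2)] : Fin 4 → ℚ) =
      Matrix.vecMul
        (![coeffZ (f ^ n) (2 * (n : ℤ) - 3),
           coeffZ (f ^ n) (2 * (n : ℤ) - 2),
           coeffZ (f ^ n) (2 * (n : ℤ) - 1),
           coeffZ (f ^ n) (2 * (n : ℤ))] : Fin 4 → ℚ) M := by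
  subst hJ1 hJ2 hJ3 hJ4 hM
  have E := coeffZ_quartic_pow_recurrence hf n
  -- `ring_nf` also normalizes the shifted indices, identifying e.g. `2 * n - 1 - 1` with `2 * n - 2`.
  ext i
  fin_cases i <;> simp only [Fin.isValue, Fin.zero_eta, Fin.mk_one, Fin.reduceFinMk,
    Pi.smul_apply, smul_eq_mul, vecMul, dotProduct, Fin.sum_univ_four, of_apply, cons_val',
    cons_val_zero, cons_val_one, Matrix.cons_val, cons_val_fin_one,
    coeffZ_quartic_pow_succ hf]
  · linear_combination (norm := (push_cast; ring_nf))
      -2 * f0 * f4 * (2 * (n : ℚ) + 1) * ((n : ℚ) + 2) * E (2 * n - 1)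
      - f0 * f3 * (2 * (n : ℚ) + 1) * ((n : ℚ) + 1) * E (2 * n)
  · linear_combination (norm := (push_cast; ring_nf))
      -f0 * f4 * (2 * (n : ℚ) + 1) * (2 * (n : ℚ) + 5) * E (2 * n)
  · linear_combination (norm := (push_cast; ring_nf))
      2 * f0 * f4 * (2 * (n : ℚ) + 5) * ((n : ℚ) + 2) * E (2 * n + 1)
  · -- `E (2n+2)` enters with the multiplier f₀f₄(2n+1)(n+2)(2n+5)/(n+1): clear the denominator.
    apply mul_left_cancel₀ (by positivity : (n : ℚ) + 1 ≠ 0)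
    linear_combination (norm := (push_cast; ring_nf))
      ((n : ℚ) + 1) * f1 * f4 * (2 * (n : ℚ) + 5) * ((n : ℚ) + 2) * E (2 * n + 1)
      + f0 * f4 * (2 * (n : ℚ) + 5) * (2 * (n : ℚ) + 1) * ((n : ℚ) + 2) * E (2 * n + 2)

/-- Genus 1 quartic model transition: D_n · v_{n+1} = v_n · M_n where
v_n = [fⁿ_{2n-3}, fⁿ_{2n-2}, fⁿ_{2n-1}, fⁿ_{2n}], D_n = 2(n+2)(2n+1)(2n+5)f₀f₄, and M_n is
the explicit 4×4 matrix. -/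
theorem genus1_quartic_transition (f0 f1 f2 f3 f4 : ℚ) (h : f0 * f4 ≠ 0)
    (f : Polynomial ℚ)
    (hf : f = C f4 * X ^ 4 + C f3 * X ^ 3 + C f2 * X ^ 2 + C f1 * X + C f0)
    (n : ℕ) (hn : 3 ≤ n)
    (J1 J2 J3 J4 : ℚ)
    (hJ1 : J1 = ((n : ℚ) + 1) * (2 * n + 1) * f0)
    (hJ2 : J2 = ((n : ℚ) + 1) * (2 * n + 1) * (2 * n + 5) * f0 * f4)
    (hJ3 : J3 = 2 * ((n : ℚ) + 1) * ((n : ℚ) + 2) * (2 * n + 5) * f0 * f4)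
    (hJ4 : J4 = ((n : ℚ) + 2) * (2 * n + 5) * f4)
    (M : Matrix (Fin 4) (Fin 4) ℚ)
    (hM : M = !![(-((n : ℚ) + 3) * f3 ^ 2 + 4 * ((n : ℚ) + 2) * f2 * f4) * J1,
                   f3 * J2, 4 * f4 * J3, (2 * (n : ℚ) + 3) * f1 * f4 * J4;
                 (-2 * f2 * f3 + 6 * ((n : ℚ) + 2) * f1 * f4) * J1,
                   2 * f2 * J2, 3 * f3 * J3,
                   (4 * (2 * (n : ℚ) + 1) * f0 * f4 + ((n : ℚ) + 2) * f1 * f3) * J4;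
                 (((n : ℚ) - 1) * f1 * f3 + 8 * ((n : ℚ) + 2) * f0 * f4) * J1,
                   3 * f1 * J2, 2 * f2 * J3,
                   (3 * (2 * (n : ℚ) + 1) * f0 * f3 + f1 * f2) * J4;
                 2 * (n : ℚ) * f0 * f3 * J1, 4 * f0 * J2, f1 * J3,
                   (2 * (2 * (n : ℚ) + 1) * f0 * f2 - (n : ℚ) * f1 ^ 2) * J4]) :
    (2 * ((n : ℚ) + 2) * (2 * (n : ℚ) + 1) * (2 * (n : ℚ) + 5) * f0 * f4) •
        (![coeffZ (f ^ (n + 1)) (2 * (n : ℤ) - 1),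
           coeffZ (f ^ (n + 1)) (2 * (n : ℤ)),
           coeffZ (f ^ (n + 1)) (2 * (n : ℤ) + 1),
           coeffZ (f ^ (n + 1)) (2 * (n : ℤ) + 2)] : Fin 4 → ℚ) =
      Matrix.vecMul
        (![coeffZ (f ^ n) (2 * (n : ℤ) - 3),
           coeffZ (f ^ n) (2 * (n : ℤ) - 2),
           coeffZ (f ^ n) (2 * (n : ℤ) - 1),
           coeffZ (f ^ n) (2 * (n : ℤ))] : Fin 4 → ℚ) M :=
  genus1_quartic_transition_general f0 f1 f2 f3 f4 f hf n J1 J2 J3 J4 hJ1 hJ2 hJ3 hJ4 M hM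
end
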